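/- arXiv:1908.06527 — 3 statements merged into one kernel-verified Lean document; each statement's English description precedes it below -/
import Mathlib

section
/- Let m ∈ ℕ and f ∈ [0,1]^m with Σ_{i=1}^m f_i ≤ m/2. Let ℓ ∈ [1..m] and suppose S := Σ_{i=1}^ℓ f_i satisfies 1/8 ≤ S ≤ 19/24. Let x ∈ {0,1}^ℓ be sampled with independent bits where Pr[x_i=1]=f_i, define q_0 = Pr[Σ x_i = 0] and q_1 = Pr[Σ x_i = 1]. Then q_0 ≥ 1 − S and q_1 ≥ S(1 − S), and hence 2 q_0 q_1 ≥ 1/16. -/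
open Finset

section OrderedRing

variable {ι R : Type*} [CommRing R] [LinearOrder R] [IsStrictOrderedRing R] {s : Finset ι} {f : ι → R}

/-- The Weierstrass product inequality. -/
theorem one_sub_sum_le_prod_one_sub (hf : ∀ i ∈ s, 0 ≤ f i ∧ f i ≤ 1) :
    1 - ∑ i ∈ s, f i ≤ ∏ i ∈ s, (1 - f i) := by
  classical
  induction s using Finset.induction_on with
  | empty => simp
  | insert a s ha ih =>
    obtain ⟨hfa0, hfa1⟩ := hf a (mem_insert_self a s)
    have hsum : 0 ≤ ∑ i ∈ s, f i := sum_nonneg fun i hi => (hf i (mem_insert_of_mem hi)).1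
    have ih := ih fun i hi => hf i (mem_insert_of_mem hi)
    rw [sum_insert ha, prod_insert ha]
    calc 1 - (f a + ∑ i ∈ s, f i)
        ≤ (1 - f a) * (1 - ∑ i ∈ s, f i) := by linarith [mul_nonneg hfa0 hsum]
      _ ≤ (1 - f a) * ∏ i ∈ s, (1 - f i) := mul_le_mul_of_nonneg_left ih (sub_nonneg.2 hfa1)

theorem prod_one_sub_le_prod_erase_one_sub [DecidableEq ι] (hf : ∀ i ∈ s, 0 ≤ f i ∧ f i ≤ 1)
    {i : ι} (hi : i ∈ s) : ∏ j ∈ s, (1 - f j) ≤ ∏ j ∈ s.erase i, (1 - f j) := by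
  rw [← mul_prod_erase s _ hi]
  refine mul_le_of_le_one_left ?_ (sub_le_self _ (hf i hi).1)
  exact prod_nonneg fun j hj => sub_nonneg.2 (hf j (mem_of_mem_erase hj)).2

/-- In probabilistic terms: `Pr[exactly one success] ≥ 𝔼[#successes] · Pr[no success]`. -/
theorem sum_mul_prod_one_sub_le_sum_mul_prod_erase [DecidableEq ι]
    (hf : ∀ i ∈ s, 0 ≤ f i ∧ f i ≤ 1) :
    (∑ i ∈ s, f i) * ∏ j ∈ s, (1 - f j) ≤ ∑ i ∈ s, f i * ∏ j ∈ s.erase i, (1 - f j) := by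
  rw [sum_mul]
  exact sum_le_sum fun i hi =>
    mul_le_mul_of_nonneg_left (prod_one_sub_le_prod_erase_one_sub hf hi) (hf i hi).1

end OrderedRing

theorem one_div_thirtyTwo_le_mul_one_sub_sq {z : ℝ} (hz1 : 1 / 8 ≤ z) (hz2 : z ≤ 19 / 24) :
    1 / 32 ≤ z * (1 - z) ^ 2 := by
  nlinarith [mul_nonneg (sub_nonneg.2 hz1) (sub_nonneg.2 hz2), sq_nonneg (z - 1 / 3)]

theorem q0_q1_bounds_general (m ℓ : ℕ) (hℓm : ℓ ≤ m) (f : ℕ → ℝ)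
    (hf : ∀ i < m, 0 ≤ f i ∧ f i ≤ 1)
    (S : ℝ) (hS : S = ∑ i ∈ Finset.range ℓ, f i)
    (hS1 : 1/8 ≤ S) (hS2 : S ≤ 19/24)
    (q0 q1 : ℝ)
    (hq0 : q0 = ∏ i ∈ Finset.range ℓ, (1 - f i))
    (hq1 : q1 = ∑ i ∈ Finset.range ℓ, f i * ∏ j ∈ (Finset.range ℓ).erase i, (1 - f j)) :
    1 - S ≤ q0 ∧ S * (1 - S) ≤ q1 ∧ 1/16 ≤ 2 * q0 * q1 := by
  have hf' : ∀ i ∈ range ℓ, 0 ≤ f i ∧ f i ≤ 1 := fun i hi => hf i ((mem_range.1 hi).trans_le hℓm)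
  have h0 : 1 - S ≤ q0 := hS ▸ hq0 ▸ one_sub_sum_le_prod_one_sub hf'
  have h1 : S * (1 - S) ≤ q1 :=
    calc S * (1 - S) ≤ S * q0 := mul_le_mul_of_nonneg_left h0 (by linarith)
      _ ≤ q1 := hS ▸ hq0 ▸ hq1 ▸ sum_mul_prod_one_sub_le_sum_mul_prod_erase hf'
  refine ⟨h0, h1, ?_⟩
  calc 1 / 16 ≤ 2 * (1 - S) * (S * (1 - S)) := by
        linarith [one_div_thirtyTwo_le_mul_one_sub_sq hS1 hS2]
    _ ≤ 2 * q0 * q1 := mul_le_mul (by linarith) h1 (by nlinarith) (by linarith)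

/-- Bounds q_0 ≥ 1 − S, q_1 ≥ S(1 − S) and 2 q_0 q_1 ≥ 1/16 for the
probabilities of sampling zero resp. one one-bit among the first ℓ positions. -/
theorem q0_q1_bounds (m ℓ : ℕ) (hℓ1 : 1 ≤ ℓ) (hℓm : ℓ ≤ m) (f : ℕ → ℝ)
    (hf : ∀ i < m, 0 ≤ f i ∧ f i ≤ 1)
    (hsum : ∑ i ∈ Finset.range m, f i ≤ (m : ℝ) / 2)
    (S : ℝ) (hS : S = ∑ i ∈ Finset.range ℓ, f i)
    (hS1 : 1/8 ≤ S) (hS2 : S ≤ 19/24)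
    (q0 q1 : ℝ)
    (hq0 : q0 = ∏ i ∈ Finset.range ℓ, (1 - f i))
    (hq1 : q1 = ∑ i ∈ Finset.range ℓ, f i * ∏ j ∈ (Finset.range ℓ).erase i, (1 - f j)) :
    1 - S ≤ q0 ∧ S * (1 - S) ≤ q1 ∧ 1/16 ≤ 2 * q0 * q1 :=
  q0_q1_bounds_general m ℓ hℓm f hf S hS hS1 hS2 q0 q1 hq0 hq1
end

section
/- Let n ∈ ℕ, m ∈ [n/2..n], and f ∈ [1/n, 1−1/n]^m. Let x¹, x² ∈ {0,1}^m be sampled independently, each with independent bits where Pr[x^j_i = 1] = f_i. Then Pr[‖x¹‖₁ ≠ ‖x²‖₁] ≥ 1/16, where ‖x‖₁ denotes the number of one-bits. -/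
/-!
Write `‖x¹‖₁ - ‖x²‖₁ = ∑ᵢ (x¹ᵢ - x²ᵢ)`, a sum of independent symmetric `{-1, 0, 1}`-valued
variables. Its variance is `V = ∑ᵢ 2 fᵢ (1 - fᵢ) ≥ m / n ≥ 1/2`, and in the expansion of its fourth
power only the terms `E[Xᵢ⁴] ≤ E[Xᵢ²]` and `E[Xᵢ² Xⱼ²]` survive, so its fourth moment is at most
`V + 3 V²`. Cauchy–Schwarz on the event that the difference is nonzero (Paley–Zygmund) bounds the
probability of that event below by `V² / (V + 3 V²) ≥ 1/5`.
-/

open Finset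

theorem sq_sum_mul_sq_le_sum_ne_zero_mul {ι : Type*} [Fintype ι] (W T : ι → ℝ)
    (hW : ∀ i, 0 ≤ W i) :
    (∑ i, W i * T i ^ 2) ^ 2 ≤ (∑ i with T i ≠ 0, W i) * ∑ i, W i * T i ^ 4 := by
  have hsupp : ∑ i with T i ≠ 0, W i * T i ^ 2 = ∑ i, W i * T i ^ 2 :=
    sum_filter_of_ne fun i _ h hT => h (by simp [hT])
  rw [← hsupp]
  calc (∑ i with T i ≠ 0, W i * T i ^ 2) ^ 2
      ≤ (∑ i with T i ≠ 0, W i) * ∑ i with T i ≠ 0, W i * T i ^ 4 :=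
        sum_sq_le_sum_mul_sum_of_sq_le_mul _ (fun i _ => hW i)
          (fun i _ => mul_nonneg (hW i) (by positivity)) fun i _ => le_of_eq (by ring)
    _ ≤ (∑ i with T i ≠ 0, W i) * ∑ i, W i * T i ^ 4 := by
        refine mul_le_mul_of_nonneg_left ?_ (sum_nonneg fun i _ => hW i)
        exact sum_le_sum_of_subset_of_nonneg (filter_subset _ _) fun i _ _ =>
          mul_nonneg (hW i) (by positivity)

section SumMoments

variable {C : Type*} [Fintype C]

def sumMoment {m : ℕ} (w : Fin m → C → ℝ) (e : C → ℝ) (k : ℕ) : ℝ :=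
  ∑ ω : Fin m → C, (∏ i, w i (ω i)) * (∑ i, e (ω i)) ^ k

theorem sumMoment_succ {m : ℕ} (w : Fin (m + 1) → C → ℝ) (e : C → ℝ) (k : ℕ) :
    sumMoment w e k = ∑ j ∈ range (k + 1),
      (∑ c, w 0 c * e c ^ j) * sumMoment (Fin.tail w) e (k - j) * k.choose j := by
  have hcons : sumMoment w e k = ∑ c, ∑ ω : Fin m → C,
      w 0 c * ((∏ i, Fin.tail w i (ω i)) * (e c + ∑ i, e (ω i)) ^ k) := by
    rw [sumMoment, ← (Fin.consEquiv fun _ => C).sum_comp, Fintype.sum_prod_type]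
    simp [Fin.consEquiv, Fin.prod_univ_succ, Fin.sum_univ_succ, mul_assoc, Fin.tail]
  rw [hcons, sum_comm]
  simp_rw [sumMoment, mul_sum, sum_mul]
  conv_rhs => rw [sum_comm]
  refine sum_congr rfl fun ω _ => ?_
  rw [sum_comm]
  refine sum_congr rfl fun c _ => ?_
  rw [add_pow, mul_sum, mul_sum]
  exact sum_congr rfl fun j _ => by ring

theorem sumMoment_zero {m : ℕ} (w : Fin m → C → ℝ) (e : C → ℝ) (h0 : ∀ i, ∑ c, w i c = 1) :
    sumMoment w e 0 = 1 := by
  simp [sumMoment, ← Fintype.prod_sum, h0]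

theorem sumMoment_one {m : ℕ} (w : Fin m → C → ℝ) (e : C → ℝ) (h0 : ∀ i, ∑ c, w i c = 1)
    (h1 : ∀ i, ∑ c, w i c * e c = 0) : sumMoment w e 1 = 0 := by
  induction m with
  | zero => simp [sumMoment]
  | succ m ih =>
    rw [sumMoment_succ]
    simp [sum_range_succ, h0, h1, ih (Fin.tail w) (fun i => h0 i.succ) (fun i => h1 i.succ)]

theorem sumMoment_two {m : ℕ} (w : Fin m → C → ℝ) (e : C → ℝ) (h0 : ∀ i, ∑ c, w i c = 1)
    (h1 : ∀ i, ∑ c, w i c * e c = 0) : sumMoment w e 2 = ∑ i, ∑ c, w i c * e c ^ 2 := by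
  induction m with
  | zero => simp [sumMoment]
  | succ m ih =>
    rw [sumMoment_succ, Fin.sum_univ_succ]
    simp [sum_range_succ, h0, h1, ih (Fin.tail w) (fun i => h0 i.succ) (fun i => h1 i.succ),
      sumMoment_zero (Fin.tail w) e (fun i => h0 i.succ), Fin.tail]
    ring

theorem sumMoment_three {m : ℕ} (w : Fin m → C → ℝ) (e : C → ℝ) (h0 : ∀ i, ∑ c, w i c = 1)
    (h1 : ∀ i, ∑ c, w i c * e c = 0) (h3 : ∀ i, ∑ c, w i c * e c ^ 3 = 0) :
    sumMoment w e 3 = 0 := by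
  induction m with
  | zero => simp [sumMoment]
  | succ m ih =>
    rw [sumMoment_succ]
    simp [sum_range_succ, h0, h1, h3,
      ih (Fin.tail w) (fun i => h0 i.succ) (fun i => h1 i.succ) (fun i => h3 i.succ),
      sumMoment_one (Fin.tail w) e (fun i => h0 i.succ) (fun i => h1 i.succ)]

theorem sumMoment_four_le {m : ℕ} (w : Fin m → C → ℝ) (e : C → ℝ) (h0 : ∀ i, ∑ c, w i c = 1)
    (h1 : ∀ i, ∑ c, w i c * e c = 0) (h3 : ∀ i, ∑ c, w i c * e c ^ 3 = 0)
    (h4 : ∀ i, ∑ c, w i c * e c ^ 4 ≤ ∑ c, w i c * e c ^ 2) :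
    sumMoment w e 4 ≤ sumMoment w e 2 + 3 * sumMoment w e 2 ^ 2 := by
  induction m with
  | zero => simp [sumMoment]
  | succ m ih =>
    have ih' := ih (Fin.tail w) (fun i => h0 i.succ) (fun i => h1 i.succ) (fun i => h3 i.succ)
      (fun i => h4 i.succ)
    have hV' : sumMoment (Fin.tail w) e 2 = ∑ i : Fin m, ∑ c, w i.succ c * e c ^ 2 :=
      sumMoment_two _ e (fun i => h0 i.succ) (fun i => h1 i.succ)
    rw [sumMoment_two w e h0 h1, Fin.sum_univ_succ, ← hV', sumMoment_succ]
    simp [sum_range_succ, Nat.choose, h0, h1, h3,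
      sumMoment_zero (Fin.tail w) e (fun i => h0 i.succ)]
    nlinarith [h4 0, sq_nonneg (∑ c, w 0 c * e c ^ 2)]

theorem sumMoment_two_sq_le {m : ℕ} (w : Fin m → C → ℝ) (e : C → ℝ)
    (hw : ∀ i c, 0 ≤ w i c) :
    sumMoment w e 2 ^ 2 ≤
      (∑ ω : Fin m → C with ∑ i, e (ω i) ≠ 0, ∏ i, w i (ω i)) * sumMoment w e 4 :=
  sq_sum_mul_sq_le_sum_ne_zero_mul _ _ fun ω => prod_nonneg fun i _ => hw i (ω i)

end SumMoments

/-- `pairWeight p` is the joint law of the `i`-th bits of the two samples when `fᵢ = p`, and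
`pairDiff` is their contribution to `‖x¹‖₁ - ‖x²‖₁`. -/
def pairWeight (p : ℝ) (c : Bool × Bool) : ℝ :=
  (if c.1 then p else 1 - p) * (if c.2 then p else 1 - p)

def pairDiff (c : Bool × Bool) : ℝ :=
  (if c.1 then 1 else 0) - (if c.2 then 1 else 0)

theorem pairWeight_nonneg {p : ℝ} (hp0 : 0 ≤ p) (hp1 : p ≤ 1) (c : Bool × Bool) :
    0 ≤ pairWeight p c :=
  mul_nonneg (by split_ifs <;> linarith) (by split_ifs <;> linarith)

theorem sum_pairWeight (p : ℝ) : ∑ c, pairWeight p c = 1 := by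
  simp [Fintype.sum_prod_type, pairWeight]
  ring

theorem sum_pairWeight_mul_pairDiff_pow (p : ℝ) {k : ℕ} (hk : k ≠ 0) :
    ∑ c, pairWeight p c * pairDiff c ^ k = p * (1 - p) * (1 + (-1) ^ k) := by
  simp [Fintype.sum_prod_type, pairWeight, pairDiff, hk]
  ring

theorem sumMoment_pairDiff_two {m : ℕ} (f : Fin m → ℝ) :
    sumMoment (fun i => pairWeight (f i)) pairDiff 2 = ∑ i, 2 * f i * (1 - f i) := by
  rw [sumMoment_two _ _ (fun i => sum_pairWeight (f i))
    (fun i => by simpa using sum_pairWeight_mul_pairDiff_pow (f i) one_ne_zero)]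
  refine sum_congr rfl fun i _ => ?_
  rw [sum_pairWeight_mul_pairDiff_pow (f i) two_ne_zero]
  ring

theorem sumMoment_pairDiff_four_le {m : ℕ} (f : Fin m → ℝ) :
    sumMoment (fun i => pairWeight (f i)) pairDiff 4 ≤
      sumMoment (fun i => pairWeight (f i)) pairDiff 2 +
        3 * sumMoment (fun i => pairWeight (f i)) pairDiff 2 ^ 2 := by
  have moment (i : Fin m) {k : ℕ} (hk : k ≠ 0) := sum_pairWeight_mul_pairDiff_pow (f i) hk
  refine sumMoment_four_le _ _ (fun i => sum_pairWeight (f i))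
    (fun i => by simpa using moment i one_ne_zero) (fun i => ?_) (fun i => ?_)
  · rw [moment i three_ne_zero]; norm_num
  · rw [moment i four_ne_zero, moment i two_ne_zero]; norm_num

theorem le_two_mul_mul_one_sub {a p : ℝ} (ha : 0 ≤ a) (hap : a ≤ p) (hpa : p ≤ 1 - a) :
    a ≤ 2 * p * (1 - p) := by
  nlinarith [mul_nonneg (sub_nonneg.2 hap) (sub_nonneg.2 hpa)]

theorem sum_sum_ite_card_ne_eq {m : ℕ} (f : Fin m → ℝ) :
    (∑ x : Fin m → Bool, ∑ y : Fin m → Bool,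
      if #{i | x i = true} ≠ #{i | y i = true}
      then (∏ i, if x i then f i else 1 - f i) * (∏ i, if y i then f i else 1 - f i) else 0)
    = ∑ ω : Fin m → Bool × Bool with ∑ i, pairDiff (ω i) ≠ 0, ∏ i, pairWeight (f i) (ω i) := by
  rw [sum_filter, ← Fintype.sum_prod_type']
  refine (Fintype.sum_equiv (Equiv.arrowProdEquivProdArrow _ _ _) _ _ fun ω => ?_).symm
  have hdiff : ∑ i, pairDiff (ω i) = (#{i | (ω i).1 = true} : ℝ) - #{i | (ω i).2 = true} := by
    simp [pairDiff, sum_sub_distrib, sum_boole]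
  simp only [hdiff, sub_ne_zero, ne_eq, Nat.cast_inj, pairWeight, prod_mul_distrib]
  rfl

theorem diff_norm_prob_general (n m : ℕ) (hn : 0 < n) (hm1 : (n : ℝ) / 2 ≤ m)
    (f : Fin m → ℝ) (hf : ∀ i, 1 / (n : ℝ) ≤ f i ∧ f i ≤ 1 - 1 / (n : ℝ)) :
    (1/16 : ℝ) ≤ ∑ x : Fin m → Bool, ∑ y : Fin m → Bool,
      if (Finset.univ.filter (fun i => x i = true)).card
          ≠ (Finset.univ.filter (fun i => y i = true)).card
      then (∏ i, if x i then f i else 1 - f i) * (∏ i, if y i then f i else 1 - f i)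
      else 0 := by
  have hn' : (0 : ℝ) < n := Nat.cast_pos.2 hn
  have hw : ∀ i c, 0 ≤ pairWeight (f i) c := fun i =>
    have : 0 ≤ 1 / (n : ℝ) := by positivity
    pairWeight_nonneg (by linarith [hf i]) (by linarith [hf i])
  have hV : 1 / 2 ≤ sumMoment (fun i => pairWeight (f i)) pairDiff 2 := by
    rw [sumMoment_pairDiff_two]
    calc (1 / 2 : ℝ) ≤ ∑ _i : Fin m, 1 / (n : ℝ) := by
          rw [sum_const, card_univ, Fintype.card_fin, nsmul_eq_mul, mul_one_div,
            le_div_iff₀ hn']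
          linarith
      _ ≤ ∑ i, 2 * f i * (1 - f i) :=
          sum_le_sum fun i _ => le_two_mul_mul_one_sub (by positivity) (hf i).1 (hf i).2
  have hPZ := sumMoment_two_sq_le _ pairDiff hw
  have hM4 := sumMoment_pairDiff_four_le f
  rw [sum_sum_ite_card_ne_eq]
  set P := ∑ ω : Fin m → Bool × Bool with ∑ i, pairDiff (ω i) ≠ 0, ∏ i, pairWeight (f i) (ω i)
  have hP : 0 ≤ P := sum_nonneg fun ω _ => prod_nonneg fun i _ => hw i (ω i)
  nlinarith [mul_le_mul_of_nonneg_left hM4 hP]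

/-- Two independent samples from the same product distribution on {0,1}^m with
all marginals in [1/n, 1−1/n] and m ∈ [n/2..n] have different numbers of one-bits with
probability at least 1/16. -/
theorem diff_norm_prob (n m : ℕ) (hn : 0 < n) (hm1 : (n : ℝ) / 2 ≤ m) (hm2 : m ≤ n)
    (f : Fin m → ℝ) (hf : ∀ i, 1 / (n : ℝ) ≤ f i ∧ f i ≤ 1 - 1 / (n : ℝ)) :
    (1/16 : ℝ) ≤ ∑ x : Fin m → Bool, ∑ y : Fin m → Bool,
      if (Finset.univ.filter (fun i => x i = true)).card
          ≠ (Finset.univ.filter (fun i => y i = true)).card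
      then (∏ i, if x i then f i else 1 - f i) * (∏ i, if y i then f i else 1 - f i)
      else 0 :=
  diff_norm_prob_general n m hn hm1 f hf
end

section
/- Let α, β ≥ 0 be constants with αβ < 4/3, and let F: {0,1}^n → ℝ have at most αⁿ global optima. Consider the compact genetic algorithm with hypothetical population size μ started with all frequencies equal to 1/2. In iteration t (t = 1, 2, ...), every frequency lies in [1/2 − (t−1)/μ, 1/2 + (t−1)/μ]. Consequently, the probability that any of the at most 2T search points generated in the first T = min{μ/4, βⁿ} iterations is a global optimum is at most 2(αβ · 3/4)ⁿ. -/
open Finset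

/-!
Since the frequencies start at `1/2` and move by at most `1/μ` per iteration, in iteration
`t < μ/4` every frequency lies in `[1/4, 3/4]`. Each coordinate of a sampled search point then
hits a prescribed bit with probability at most `3/4`, so a fixed optimum is sampled with
probability at most `(3/4)ⁿ`. A union bound over the two samples of each of the
`T ≤ βⁿ` iterations and the at most `αⁿ` optima gives `2 (αβ · 3/4)ⁿ`.
-/

lemma dist_le_mul_of_dist_succ_le {X : Type*} [PseudoMetricSpace X] {x : ℕ → X} {c : ℝ}
    (h : ∀ t, dist (x t) (x (t + 1)) ≤ c) (t : ℕ) : dist (x 0) (x t) ≤ t * c := by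
  simpa using dist_le_range_sum_of_dist_le (d := fun _ => c) t fun {k} _ => h k

lemma abs_sub_half_le_of_abs_step_le {f : ℕ → ℝ} {c : ℝ} (h0 : f 0 = 1 / 2)
    (hstep : ∀ t, |f (t + 1) - f t| ≤ c) (t : ℕ) : |f t - 1 / 2| ≤ t * c := by
  rw [← h0, ← Real.dist_eq, dist_comm]
  exact dist_le_mul_of_dist_succ_le (fun s => by rw [dist_comm, Real.dist_eq]; exact hstep s) t

lemma prod_ite_le_half_add_pow {ι : Type*} [Fintype ι] {p : ι → ℝ} {δ : ℝ} (hδ : δ ≤ 1 / 2)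
    (hp : ∀ i, |p i - 1 / 2| ≤ δ) (y : ι → Bool) :
    ∏ i, (if y i then p i else 1 - p i) ≤ (1 / 2 + δ) ^ Fintype.card ι := by
  -- `1 - p i` is exactly as close to `1/2` as `p i` is.
  have hclose : ∀ i, |(if y i then p i else 1 - p i) - 1 / 2| ≤ δ := fun i => by
    split_ifs
    · exact hp i
    · rw [show 1 - p i - 1 / 2 = -(p i - 1 / 2) by ring, abs_neg]; exact hp i
  rw [← Finset.card_univ, ← Finset.prod_const]
  refine Finset.prod_le_prod (fun i _ => ?_) (fun i _ => ?_) <;>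
    linarith [(abs_le.mp (hclose i)).1, (abs_le.mp (hclose i)).2]

theorem cga_trivial_lower_bound_general (n : ℕ) (α β : ℝ) (μ : ℝ)
    (Opt : Finset (Fin n → Bool)) (hOpt : (Opt.card : ℝ) ≤ α ^ n)
    (f : ℕ → Fin n → ℝ) (hf0 : ∀ i, f 0 i = 1/2)
    (hstep : ∀ t i, |f (t+1) i - f t i| ≤ 1/μ)
    (T : ℕ) (hT1 : (T : ℝ) ≤ μ/4) (hT2 : (T : ℝ) ≤ β ^ n) :
    (∀ t i, |f t i - 1/2| ≤ (t : ℝ)/μ)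
    ∧ ∑ t ∈ Finset.range T, ∑ y ∈ Opt, 2 * ∏ i, (if y i then f t i else 1 - f t i)
      ≤ 2 * (α * β * (3/4)) ^ n := by
  have hfreq : ∀ t i, |f t i - 1/2| ≤ (t : ℝ)/μ := fun t i => by
    rw [div_eq_mul_one_div (t : ℝ)]
    exact abs_sub_half_le_of_abs_step_le (f := fun s => f s i) (hf0 i) (fun s => hstep s i) t
  refine ⟨hfreq, ?_⟩
  have hsample : ∀ t ∈ Finset.range T, ∀ y ∈ Opt,
      2 * ∏ i, (if y i then f t i else 1 - f t i) ≤ 2 * (3/4 : ℝ) ^ n := by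
    intro t ht y _
    have htμ : (t : ℝ) < μ / 4 := lt_of_lt_of_le (by exact_mod_cast Finset.mem_range.mp ht) hT1
    have hquarter : (t : ℝ) / μ ≤ 1 / 4 := by
      rw [div_le_iff₀ (by linarith [t.cast_nonneg (α := ℝ)])]; linarith
    have := prod_ite_le_half_add_pow (by norm_num) (fun i => (hfreq t i).trans hquarter) y
    norm_num at this ⊢
    exact this
  calc ∑ t ∈ Finset.range T, ∑ y ∈ Opt, 2 * ∏ i, (if y i then f t i else 1 - f t i)
      ≤ ∑ t ∈ Finset.range T, ∑ y ∈ Opt, 2 * (3/4 : ℝ) ^ n :=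
        Finset.sum_le_sum fun t ht => Finset.sum_le_sum (hsample t ht)
    _ = T * (Opt.card * (2 * (3/4 : ℝ) ^ n)) := by simp
    _ ≤ β ^ n * (α ^ n * (2 * (3/4 : ℝ) ^ n)) := by
        gcongr
        exact T.cast_nonneg.trans hT2
    _ = 2 * (α * β * (3/4)) ^ n := by ring

/-- In a run of the cGA (frequencies start at 1/2 and move by at most 1/μ per
iteration), all frequencies in iteration t lie within t/μ of 1/2; consequently, for a fitness
function with at most αⁿ optima and T = min{μ/4, βⁿ}, the total probability (union bound over
the 2 samples per iteration and all optima) that one of the first T iterations samples an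
optimum is at most 2(αβ·3/4)ⁿ. -/
theorem cga_trivial_lower_bound (n : ℕ) (α β : ℝ) (hα : 0 ≤ α) (hβ : 0 ≤ β)
    (hαβ : α * β < 4/3) (μ : ℝ) (hμ : 0 < μ)
    (Opt : Finset (Fin n → Bool)) (hOpt : (Opt.card : ℝ) ≤ α ^ n)
    (f : ℕ → Fin n → ℝ) (hf0 : ∀ i, f 0 i = 1/2)
    (hstep : ∀ t i, |f (t+1) i - f t i| ≤ 1/μ)
    (T : ℕ) (hT1 : (T : ℝ) ≤ μ/4) (hT2 : (T : ℝ) ≤ β ^ n) :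
    (∀ t i, |f t i - 1/2| ≤ (t : ℝ)/μ)
    ∧ ∑ t ∈ Finset.range T, ∑ y ∈ Opt, 2 * ∏ i, (if y i then f t i else 1 - f t i)
      ≤ 2 * (α * β * (3/4)) ^ n :=
  cga_trivial_lower_bound_general n α β μ Opt hOpt f hf0 hstep T hT1 hT2
end
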